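/- Let u, w be unit vectors in a complex Hilbert space. Then the trace norm of the operator |u⟩⟨w| + |w⟩⟨u| equals 2·√(1 − (Im⟨u|w⟩)²). -/

import Mathlib

open Finset Matrix
open scoped ComplexOrder

noncomputable section

private lemma vvmul {n : ℕ} (a b c e : Fin n → ℂ) :
    vecMulVec a b * vecMulVec c e = (b ⬝ᵥ c) • vecMulVec a e := by
  ext i j
  simp only [Matrix.mul_apply, vecMulVec_apply, Matrix.smul_apply, smul_eq_mul, dotProduct,
    Finset.sum_mul]
  exact Finset.sum_congr rfl fun k _ => by ring

private lemma conjT_vvm {n : ℕ} (a b : Fin n → ℂ) :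
    (vecMulVec a b)ᴴ = vecMulVec (star b) (star a) := by
  ext i j
  simp [conjTranspose_apply, vecMulVec_apply, mul_comm]

private lemma trace_vvm {n : ℕ} (a b : Fin n → ℂ) :
    (vecMulVec a b).trace = a ⬝ᵥ b := by
  simp [Matrix.trace, vecMulVec_apply, Matrix.diag, dotProduct]

private lemma psd_vvm {n : ℕ} (v : Fin n → ℂ) :
    (vecMulVec v (star v)).PosSemidef := by
  exact posSemidef_vecMulVec_self_star v

private lemma psd_real_smul {n : ℕ} {A : Matrix (Fin n) (Fin n) ℂ} (hA : A.PosSemidef)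
    {r : ℝ} (hr : 0 ≤ r) : (((r : ℂ)) • A).PosSemidef :=
  hA.smul (by exact_mod_cast Complex.zero_le_real.2 hr)

/-- Trace norm `‖M‖₁ = Tr √(Mᴴ M)` of a complex matrix. -/
def traceNorm {d : ℕ} (M : Matrix (Fin d) (Fin d) ℂ) : ℝ :=
  (((Matrix.posSemidef_conjTranspose_mul_self M).1.eigenvectorUnitary.1 *
      diagonal (((↑) : ℝ → ℂ) ∘ (Real.sqrt ·) ∘ (Matrix.posSemidef_conjTranspose_mul_self M).1.eigenvalues) *
      (star (Matrix.posSemidef_conjTranspose_mul_self M).1.eigenvectorUnitary :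
        Matrix (Fin d) (Fin d) ℂ)).trace).re

open scoped MatrixOrder in
private lemma traceNorm_eq_of_sq {d : ℕ} (M S : Matrix (Fin d) (Fin d) ℂ) (hS : S.PosSemidef)
    (h : S ^ 2 = Mᴴ * M) : traceNorm M = S.trace.re := by
  have hM := posSemidef_conjTranspose_mul_self M
  have h1 : CFC.sqrt (Mᴴ * M) = S :=
    (CFC.sqrt_eq_iff _ _ hM.nonneg hS.nonneg).2 (by rw [← h, pow_two])
  rw [← h1, CFC.sqrt_eq_cfc, cfc_nnreal_eq_real _ _, hM.1.cfc_eq]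
  unfold traceNorm
  simp only [IsHermitian.cfc, Unitary.conjStarAlgAut_apply]
  have hf : (fun x : ℝ => ((x.toNNReal.sqrt : NNReal) : ℝ)) = Real.sqrt := by
    funext x
    simp only [Real.coe_sqrt, Real.coe_toNNReal']
    rcases le_total x 0 with hx | hx
    · rw [max_eq_right hx, Real.sqrt_zero, Real.sqrt_eq_zero'.2 hx]
    · rw [max_eq_left hx]
  rw [hf]
  rfl

/-- For unit vectors `u, w`, the trace norm of `|u⟩⟨w| + |w⟩⟨u|` equals
`2 √(1 − (Im⟨u,w⟩)²)`, where `⟨u,w⟩ = ∑ conj (u i) * w i`. -/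
theorem stmt_14 {d : ℕ} (u w : Fin d → ℂ)
    (hu : ∑ i, Complex.normSq (u i) = 1)
    (hw : ∑ i, Complex.normSq (w i) = 1) :
    traceNorm (Matrix.vecMulVec u (star w) + Matrix.vecMulVec w (star u)) =
      2 * Real.sqrt (1 - ((∑ i, (starRingEnd ℂ) (u i) * w i).im) ^ 2) := by
  classical
  set c : ℂ := ∑ i, (starRingEnd ℂ) (u i) * w i with hcdef
  set y : ℝ := c.im with hydef
  -- Cauchy-Schwarz
  have h1u : ‖(WithLp.equiv 2 (Fin d → ℂ)).symm u‖ = 1 := by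
    rw [EuclideanSpace.norm_eq]
    have : ∀ i, ‖(WithLp.equiv 2 (Fin d → ℂ)).symm u i‖ ^ 2 = Complex.normSq (u i) := by
      intro i
      simp [Complex.sq_norm]
    simp only [this, hu, Real.sqrt_one]
  have h1w : ‖(WithLp.equiv 2 (Fin d → ℂ)).symm w‖ = 1 := by
    rw [EuclideanSpace.norm_eq]
    have : ∀ i, ‖(WithLp.equiv 2 (Fin d → ℂ)).symm w i‖ ^ 2 = Complex.normSq (w i) := by
      intro i
      simp [Complex.sq_norm]
    simp only [this, hw, Real.sqrt_one]
  have habs : ‖c‖ ≤ 1 := by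
    have h := norm_inner_le_norm (𝕜 := ℂ)
      ((WithLp.equiv 2 (Fin d → ℂ)).symm u) ((WithLp.equiv 2 (Fin d → ℂ)).symm w)
    rw [h1u, h1w, mul_one] at h
    have hin : (inner ℂ ((WithLp.equiv 2 (Fin d → ℂ)).symm u)
        ((WithLp.equiv 2 (Fin d → ℂ)).symm w) : ℂ) = c := by
      simp [PiLp.inner_apply, RCLike.inner_apply, hcdef, mul_comm]
    rwa [hin] at h
  have hyle : y ^ 2 ≤ 1 := by
    have h1 := Complex.abs_im_le_norm c
    have h2 := norm_nonneg c
    nlinarith [abs_nonneg y, sq_abs y]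
  have hk : (starRingEnd ℂ) c = c - 2 * (y : ℂ) * Complex.I := by
    have h := Complex.sub_conj c
    push_cast at h
    linear_combination -h
  -- dot product identities
  have hd_uu : star u ⬝ᵥ u = (1 : ℂ) := by
    have he : ∀ i, (star u) i * u i = (Complex.normSq (u i) : ℂ) := fun i => by
      simp [Pi.star_apply, Complex.normSq_eq_conj_mul_self, Complex.star_def]
    simp only [dotProduct, he]
    rw [← Complex.ofReal_sum, hu, Complex.ofReal_one]
  have hd_ww : star w ⬝ᵥ w = (1 : ℂ) := by
    have he : ∀ i, (star w) i * w i = (Complex.normSq (w i) : ℂ) := fun i => by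
      simp [Pi.star_apply, Complex.normSq_eq_conj_mul_self, Complex.star_def]
    simp only [dotProduct, he]
    rw [← Complex.ofReal_sum, hw, Complex.ofReal_one]
  have hd_uu' : u ⬝ᵥ star u = (1 : ℂ) := by
    have he : ∀ i, u i * (star u) i = (Complex.normSq (u i) : ℂ) := fun i => by
      simp [Pi.star_apply, Complex.star_def, Complex.mul_conj]
    simp only [dotProduct, he]
    rw [← Complex.ofReal_sum, hu, Complex.ofReal_one]
  have hd_ww' : w ⬝ᵥ star w = (1 : ℂ) := by
    have he : ∀ i, w i * (star w) i = (Complex.normSq (w i) : ℂ) := fun i => by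
      simp [Pi.star_apply, Complex.star_def, Complex.mul_conj]
    simp only [dotProduct, he]
    rw [← Complex.ofReal_sum, hw, Complex.ofReal_one]
  have hd_uw : star u ⬝ᵥ w = c := by
    rw [hcdef]
    simp [dotProduct, Pi.star_apply, Complex.star_def]
  have hd_wu' : w ⬝ᵥ star u = c := by
    rw [hcdef]
    simp only [dotProduct, Pi.star_apply, Complex.star_def]
    exact Finset.sum_congr rfl fun i _ => by ring
  have hconj_wu : star w ⬝ᵥ u = (starRingEnd ℂ) c := by
    rw [hcdef, map_sum]
    simp only [dotProduct, Pi.star_apply, Complex.star_def, _root_.map_mul,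
      Complex.conj_conj]
    exact Finset.sum_congr rfl fun i _ => by ring
  have hd_wu : star w ⬝ᵥ u = c - 2 * (y : ℂ) * Complex.I := by rw [hconj_wu, hk]
  have hd_uw' : u ⬝ᵥ star w = c - 2 * (y : ℂ) * Complex.I := by
    rw [← hk, hcdef, map_sum]
    simp only [dotProduct, Pi.star_apply, Complex.star_def, _root_.map_mul, Complex.conj_conj]
  -- matrices
  set A := vecMulVec u (star w) with hA
  set B := vecMulVec w (star u) with hB
  set Pm := vecMulVec u (star u) with hPm
  set Qm := vecMulVec w (star w) with hQm
  set T := Pm + Qm + (-(Complex.I * (y : ℂ))) • A + (Complex.I * (y : ℂ)) • B with hT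
  have hMH : (A + B)ᴴ = A + B := by
    rw [conjTranspose_add, hA, hB, conjT_vvm, conjT_vvm, star_star, star_star, add_comm]
  have hTpsd : T.PosSemidef := by
    have hdec : T = (((1 + y) / 2 : ℝ) : ℂ) •
          vecMulVec (u + Complex.I • w) (star (u + Complex.I • w))
        + (((1 - y) / 2 : ℝ) : ℂ) •
          vecMulVec (u - Complex.I • w) (star (u - Complex.I • w)) := by
      rw [hT, hA, hB, hPm, hQm]
      ext i j
      simp only [Matrix.add_apply, Matrix.smul_apply, vecMulVec_apply, Pi.add_apply, Pi.sub_apply,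
        Pi.smul_apply, Pi.star_apply, smul_eq_mul, Complex.star_def, map_add, map_sub, _root_.map_mul,
        Complex.conj_I, neg_mul, Matrix.neg_apply]
      push_cast
      linear_combination (w i * (starRingEnd ℂ) (w j)) * Complex.I_mul_I
    rw [hdec]
    have hy1 : (0:ℝ) ≤ (1 + y) / 2 := by nlinarith
    have hy2 : (0:ℝ) ≤ (1 - y) / 2 := by nlinarith
    exact (psd_real_smul (psd_vvm _) hy1).add (psd_real_smul (psd_vvm _) hy2)
  have hT2 : T * T = ((1 - y ^ 2 : ℝ) : ℂ) • ((A + B) * (A + B)) := by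
    rw [hT, hA, hB, hPm, hQm]
    simp only [add_mul, mul_add, smul_mul_assoc, mul_smul_comm, vvmul, hd_uu, hd_ww, hd_uw,
      hd_wu, one_smul, smul_smul, smul_add, neg_mul, mul_neg, neg_smul, smul_neg, neg_neg]
    ext i j
    simp only [Matrix.add_apply, Matrix.smul_apply, vecMulVec_apply, smul_eq_mul, Pi.star_apply,
      Complex.star_def, Matrix.neg_apply, Matrix.sub_apply]
    push_cast
    linear_combination ((y:ℂ)^2 * (u i * (starRingEnd ℂ) (u j) + w i * (starRingEnd ℂ) (w j)
      + (c - 2*(y:ℂ)*Complex.I) * (u i * (starRingEnd ℂ) (w j))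
      + c * (w i * (starRingEnd ℂ) (u j)))) * Complex.I_mul_I
  rcases eq_or_lt_of_le hyle with hy1 | hylt
  · -- degenerate case y² = 1
    have hy1' : y ^ 2 = 1 := hy1
    have hcre : c.re = 0 := by
      have h3 : ‖c‖ ^ 2 = c.re ^ 2 + y ^ 2 := by
        rw [Complex.sq_norm, Complex.normSq_apply, hydef]; ring
      nlinarith [norm_nonneg c]
    have hc' : c = (y : ℂ) * Complex.I := by
      apply Complex.ext <;> simp [hcre, hydef]
    have hTM : (A + B) * (A + B) = T := by
      rw [hT, hA, hB, hPm, hQm]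
      simp only [add_mul, mul_add, vvmul, hd_uu, hd_ww, hd_uw, hd_wu, one_smul]
      rw [hc']
      module
    have hTzero : T = 0 := by
      have h0 : Tᴴ * T = 0 := by
        rw [hTpsd.1, hT2]
        have hz : ((1 - y ^ 2 : ℝ) : ℂ) = 0 := by
          rw [hy1']; push_cast; ring
        rw [hz, zero_smul]
      exact conjTranspose_mul_self_eq_zero.mp h0
    have hMM0 : (A + B)ᴴ * (A + B) = 0 := by rw [hMH, hTM, hTzero]
    have hsq : traceNorm (A + B) = (0 : Matrix (Fin d) (Fin d) ℂ).trace.re :=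
      traceNorm_eq_of_sq _ _ Matrix.PosSemidef.zero (by rw [hMM0]; simp)
    rw [hsq]
    have hz1 : (1 : ℝ) - y ^ 2 = 0 := by rw [hy1']; ring
    simp [hz1]
  · -- main case y² < 1
    set s : ℝ := Real.sqrt (1 - y ^ 2) with hsdef
    have hs0 : 0 < s := Real.sqrt_pos.2 (by linarith)
    have hs2 : s ^ 2 = 1 - y ^ 2 := Real.sq_sqrt (by linarith)
    have hSpsd : (((s⁻¹ : ℝ) : ℂ) • T).PosSemidef := psd_real_smul hTpsd (inv_nonneg.2 hs0.le)
    have hcoef : ((s⁻¹ : ℝ) : ℂ) ^ 2 * ((1 - y ^ 2 : ℝ) : ℂ) = 1 := by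
      rw [← hs2]
      push_cast
      field_simp
    have hS2 : (((s⁻¹ : ℝ) : ℂ) • T) ^ 2 = (A + B)ᴴ * (A + B) := by
      rw [hMH, smul_pow, pow_two T, hT2, smul_smul, hcoef, one_smul]
    have hsq := traceNorm_eq_of_sq _ _ hSpsd hS2
    rw [hsq]
    have htr : T.trace = ((2 - 2 * y ^ 2 : ℝ) : ℂ) := by
      rw [hT, hA, hB, hPm, hQm, trace_add, trace_add, trace_add, trace_smul, trace_smul,
        trace_vvm, trace_vvm, trace_vvm, trace_vvm, hd_uu', hd_ww', hd_uw', hd_wu']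
      push_cast
      simp only [smul_eq_mul]
      linear_combination (2 * (y : ℂ) ^ 2) * Complex.I_mul_I
    rw [trace_smul, htr, smul_eq_mul]
    have hcast : ((s⁻¹ : ℝ) : ℂ) * ((2 - 2 * y ^ 2 : ℝ) : ℂ) = ((s⁻¹ * (2 - 2 * y ^ 2) : ℝ) : ℂ) := by
      push_cast; ring
    rw [hcast, Complex.ofReal_re]
    field_simp
    linarith [hs2]

end
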